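/- Under the hypotheses of the reduced ODE system (p = 2 case): c₀'(t) = -ελ a₀'(ερ₀(t)) c₀(t)², ρ₀'(t) = c₀(t), c₀(0)=1, ρ₀(0) = -ε^{-1-δ₀}, with a₀ bounded, a₀' of one fixed sign and exponentially decaying, a₀(x) → a_∞ as x → +∞: the solution satisfies ρ₀(t) → +∞ as t → +∞ and c₀(t) → e^{-λ(a_∞ - a₀(-ε^{-δ₀}))} as t → +∞. -/

import Mathlib

/-!
The quantity `c₀ t * exp (λ a₀ (ε ρ₀ t))` is a first integral of the system, so
`c₀ t = exp (λ (a₀ (ε ρ₀ 0) - a₀ (ε ρ₀ t)))`. As `a₀` is bounded this keeps `c₀` above a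
positive constant, hence `ρ₀` grows at least linearly, `ε ρ₀ t → +∞`, and the explicit formula
for `c₀` passes to the limit `a₀ (ε ρ₀ t) → a_∞`.
-/

open Real Filter Set

theorem hasDerivAt_mul_exp_comp_eq_zero {a u c : ℝ → ℝ} {lam u' t : ℝ}
    (ha : DifferentiableAt ℝ a (u t)) (hu : HasDerivAt u u' t)
    (hc : HasDerivAt c (-lam * deriv a (u t) * u' * c t) t) :
    HasDerivAt (fun s => c s * exp (lam * a (u s))) 0 t := by
  have hexp := ((ha.hasDerivAt.comp t hu).const_mul lam).exp
  exact (hc.mul hexp).congr_deriv (by simp only [Function.comp_apply]; ring)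

theorem eq_of_hasDerivAt_zero_of_nonneg {g : ℝ → ℝ} (hg : ∀ t ≥ (0 : ℝ), HasDerivAt g 0 t)
    {t : ℝ} (ht : 0 ≤ t) : g t = g 0 :=
  constant_of_has_deriv_right_zero (fun x hx => (hg x hx.1).continuousAt.continuousWithinAt)
    (fun x hx => (hg x hx.1).hasDerivWithinAt) t (right_mem_Icc.2 ht)

theorem tendsto_atTop_of_hasDerivAt_of_le {ρ c : ℝ → ℝ} {m : ℝ} (hm : 0 < m)
    (hρ : ∀ t ≥ (0 : ℝ), HasDerivAt ρ (c t) t) (hc : ∀ t ≥ (0 : ℝ), m ≤ c t) :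
    Tendsto ρ atTop atTop := by
  have hgrowth : ∀ t ≥ (0 : ℝ), ρ 0 + m * t ≤ ρ t := by
    intro t ht
    have := (convex_Ici (0 : ℝ)).mul_sub_le_image_sub_of_le_deriv
      (fun x hx => (hρ x hx).continuousAt.continuousWithinAt)
      (fun x hx => (hρ x (interior_subset hx)).differentiableAt.differentiableWithinAt)
      (fun x hx => (hρ x (interior_subset hx)).deriv ▸ hc x (interior_subset hx))
      0 self_mem_Ici t ht ht
    linarith
  refine tendsto_atTop_mono' atTop (eventually_atTop.2 ⟨0, hgrowth⟩) ?_
  exact tendsto_atTop_add_const_left _ _ (tendsto_id.const_mul_atTop hm)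

theorem exp_neg_two_mul_abs_le_exp_mul_sub {a : ℝ → ℝ} {M : ℝ} (hM : ∀ x, |a x| ≤ M)
    (lam x y : ℝ) : exp (-(2 * |lam| * M)) ≤ exp (lam * (a x - a y)) := by
  have hdiff : |a x - a y| ≤ 2 * M := (abs_sub _ _).trans (by linarith [hM x, hM y])
  have : |lam * (a x - a y)| ≤ 2 * |lam| * M := by
    rw [abs_mul, mul_assoc]
    nlinarith [abs_nonneg lam]
  exact exp_le_exp.2 (by linarith [neg_abs_le (lam * (a x - a y))])

theorem parameter_ODE_solution_eq {a c ρ : ℝ → ℝ} {ε lam : ℝ} (ha : Differentiable ℝ a)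
    (hODE : ∀ t ≥ (0:ℝ),
      HasDerivAt c (-ε * lam * deriv a (ε * ρ t) * (c t) ^ 2) t ∧ HasDerivAt ρ (c t) t)
    (hc0 : c 0 = 1) {t : ℝ} (ht : 0 ≤ t) :
    c t = exp (lam * (a (ε * ρ 0) - a (ε * ρ t))) := by
  have hconserved : ∀ s ≥ (0 : ℝ), HasDerivAt (fun s => c s * exp (lam * a (ε * ρ s))) 0 s := by
    intro s hs
    obtain ⟨hc, hρ⟩ := hODE s hs
    exact hasDerivAt_mul_exp_comp_eq_zero (ha _) (hρ.const_mul ε) (hc.congr_deriv (by ring))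
  have h := eq_of_hasDerivAt_zero_of_nonneg hconserved ht
  rw [hc0, one_mul, ← eq_div_iff (exp_pos _).ne', ← exp_sub] at h
  rw [h, mul_sub]

theorem parameter_ODE_asymptotics_general
    (a₀ : ℝ → ℝ) (aInf ε lam δ₀ : ℝ) (c₀ ρ₀ : ℝ → ℝ)
    (ha : ContDiff ℝ 1 a₀) (hbdd : ∃ M, ∀ x, |a₀ x| ≤ M)
    (hlim : Tendsto a₀ atTop (nhds aInf))
    (hε : 0 < ε)
    (hODE : ∀ t ≥ (0:ℝ),
      HasDerivAt c₀ (-ε * lam * deriv a₀ (ε * ρ₀ t) * (c₀ t) ^ 2) t ∧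
      HasDerivAt ρ₀ (c₀ t) t)
    (hc0 : c₀ 0 = 1) (hρ0 : ρ₀ 0 = -ε ^ (-(1 + δ₀))) :
    Tendsto ρ₀ atTop atTop ∧
    Tendsto c₀ atTop (nhds (Real.exp (-lam * (aInf - a₀ (-ε ^ (-δ₀)))))) := by
  obtain ⟨M, hM⟩ := hbdd
  have hsol := fun t (ht : 0 ≤ t) =>
    parameter_ODE_solution_eq (lam := lam) (ha.differentiable one_ne_zero) hODE hc0 ht
  have hρ : Tendsto ρ₀ atTop atTop :=
    tendsto_atTop_of_hasDerivAt_of_le (exp_pos (-(2 * |lam| * M))) (fun t ht => (hODE t ht).2)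
      (fun t ht => hsol t ht ▸ exp_neg_two_mul_abs_le_exp_mul_sub hM lam _ _)
  refine ⟨hρ, ?_⟩
  have hstart : ε * ρ₀ 0 = -ε ^ (-δ₀) := by
    rw [hρ0, mul_neg, mul_comm, ← rpow_add_one hε.ne']
    ring_nf
  have hlimit : Tendsto (fun t => exp (lam * (a₀ (ε * ρ₀ 0) - a₀ (ε * ρ₀ t)))) atTop
      (nhds (exp (-lam * (aInf - a₀ (ε * ρ₀ 0))))) := by
    rw [show -lam * (aInf - a₀ (ε * ρ₀ 0)) = lam * (a₀ (ε * ρ₀ 0) - aInf) by ring]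
    exact (continuous_exp.tendsto _).comp
      ((tendsto_const_nhds.sub (hlim.comp (hρ.const_mul_atTop hε))).const_mul lam)
  rw [← hstart]
  exact hlimit.congr' (eventually_atTop.2 ⟨0, fun t ht => (hsol t ht).symm⟩)

theorem parameter_ODE_asymptotics
    (a₀ : ℝ → ℝ) (aInf C γ ε lam δ₀ : ℝ) (c₀ ρ₀ : ℝ → ℝ)
    (ha : ContDiff ℝ 1 a₀) (hbdd : ∃ M, ∀ x, |a₀ x| ≤ M)
    (hC : 0 < C) (hγ : 0 < γ)
    (hdecay : ∀ x, |deriv a₀ x| ≤ C * Real.exp (-γ * |x|))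
    (hsign : (∀ x, 0 < deriv a₀ x) ∨ (∀ x, deriv a₀ x < 0))
    (hlim : Tendsto a₀ atTop (nhds aInf))
    (hε : 0 < ε) (hlam : 0 < lam) (hδ₀ : 0 < δ₀)
    (hODE : ∀ t ≥ (0:ℝ),
      HasDerivAt c₀ (-ε * lam * deriv a₀ (ε * ρ₀ t) * (c₀ t) ^ 2) t ∧
      HasDerivAt ρ₀ (c₀ t) t)
    (hc0 : c₀ 0 = 1) (hρ0 : ρ₀ 0 = -ε ^ (-(1 + δ₀))) :
    Tendsto ρ₀ atTop atTop ∧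
    Tendsto c₀ atTop (nhds (Real.exp (-lam * (aInf - a₀ (-ε ^ (-δ₀)))))) :=
  parameter_ODE_asymptotics_general a₀ aInf ε lam δ₀ c₀ ρ₀ ha hbdd hlim hε hODE hc0 hρ0
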